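/- arXiv:1503.07105 — 3 statements merged into one kernel-verified Lean document; each statement's English description precedes it below -/
import Mathlib

section
/- For every ℓ ≥ 3, let A be the ℓ×ℓ matrix over ℚ with A_{ii} = 2, A_{i,i+1} = A_{i+1,i} = −1 for 1 ≤ i ≤ ℓ−2, A_{ℓ−1,ℓ} = −1, A_{ℓ,ℓ−1} = −2, and all other entries 0 (the Cartan matrix of type B_ℓ, with α_ℓ the short simple root, convention A_{ij} = ⟨α_j, α_i^∨⟩). Then A is invertible, and the minimum of the entries of the unique row vector x with x·A = (2, 2, …, 2) equals 2ℓ. -/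
lemma sum_ind {ℓ : ℕ} (k : ℕ) (c : ℚ) (v : Fin ℓ → ℚ) :
    ∑ i : Fin ℓ, (if (i:ℕ) = k then c else 0) * v i =
      if h : k < ℓ then c * v ⟨k, h⟩ else 0 := by
  split_ifs with h
  · rw [Finset.sum_eq_single (⟨k, h⟩ : Fin ℓ)]
    · simp
    · intro b _ hb
      rw [if_neg, zero_mul]
      simpa [Fin.ext_iff] using hb
    · simp
  · apply Finset.sum_eq_zero
    intro i _
    have := i.2
    rw [if_neg (by omega), zero_mul]

lemma sum_ind' {ℓ : ℕ} (k : ℕ) (c : ℚ) (v : Fin ℓ → ℚ) :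
    ∑ i : Fin ℓ, (if (i:ℕ) + 1 = k then c else 0) * v i =
      if h : k - 1 < ℓ ∧ 1 ≤ k then c * v ⟨k - 1, h.1⟩ else 0 := by
  cases k with
  | zero => simp
  | succ n =>
    have : ∀ i : Fin ℓ, ((i:ℕ) + 1 = n + 1) = ((i:ℕ) = n) := by
      intro i; simp
    simp only [this]
    rw [sum_ind]
    split_ifs with h1 h2 h2 <;> first | rfl | omega


/-- For `ℓ ≥ 3`, the type `B_ℓ` Cartan matrix (convention `A i j = ⟨α_j, α_i^∨⟩`; in 1-indexed
notation `A_{ii} = 2`, `A_{i,i+1} = A_{i+1,i} = -1` for `1 ≤ i ≤ ℓ-2`, `A_{ℓ-1,ℓ} = -1`,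
`A_{ℓ,ℓ-1} = -2`, all other entries `0`; here indices are 0-indexed, so the entry `-2` sits
at position `(ℓ-1, ℓ-2)`) is invertible over `ℚ`, and the minimum of the entries of the
unique row vector `x` with `x · A = (2,…,2)` equals `2ℓ`. -/
theorem stmt2 (ℓ : ℕ) (hℓ : 3 ≤ ℓ) (A : Matrix (Fin ℓ) (Fin ℓ) ℚ)
    (hA : ∀ i j, A i j =
      if i = j then 2
      else if (i : ℕ) = ℓ - 1 ∧ (j : ℕ) = ℓ - 2 then -2
      else if (i : ℕ) + 1 = (j : ℕ) ∨ (j : ℕ) + 1 = (i : ℕ) then -1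
      else 0) :
    IsUnit A ∧
      ∀ x : Fin ℓ → ℚ, Matrix.vecMul x A = (fun _ => 2) →
        Finset.univ.inf'
          (Finset.univ_nonempty_iff.mpr ⟨⟨0, by omega⟩⟩) x = (2 * ℓ : ℚ) := by
  have h0lt : 0 < ℓ := by omega
  -- entry decomposition
  have Adec : ∀ i j : Fin ℓ, A i j =
      (if (i:ℕ) = (j:ℕ) then (2:ℚ) else 0)
      + (if (i:ℕ) = (j:ℕ) + 1 then (-1:ℚ) else 0)
      + (if (i:ℕ) + 1 = (j:ℕ) then (-1:ℚ) else 0)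
      + (if (i:ℕ) = ℓ - 1 then (if (j:ℕ) = ℓ - 2 then (-1:ℚ) else 0) else 0) := by
    intro i j
    have hi := i.2
    have hj := j.2
    rw [hA]
    simp only [Fin.ext_iff]
    split_ifs <;> first | omega | norm_num
  -- cast facts
  have cl1 : ((ℓ-1:ℕ):ℚ) = (ℓ:ℚ) - 1 := by rw [Nat.cast_sub (by omega)]; norm_num
  have cl2 : ((ℓ-2:ℕ):ℚ) = (ℓ:ℚ) - 2 := by rw [Nat.cast_sub (by omega)]; norm_num
  have cl3 : ((ℓ-3:ℕ):ℚ) = (ℓ:ℚ) - 3 := by rw [Nat.cast_sub (by omega)]; norm_num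
  -- the key uniqueness computation
  have key : ∀ (c : ℚ) (x : Fin ℓ → ℚ), Matrix.vecMul x A = (fun _ => c) →
      ∀ k (h : k < ℓ), x ⟨k, h⟩ =
        if k = ℓ - 1 then c*ℓ*(ℓ+1)/4 else c/2*((k:ℚ)+1)*(2*(ℓ:ℚ)-(k:ℚ)) := by
    intro c x hx
    have colEq : ∀ k (hk : k < ℓ),
        2 * x ⟨k, hk⟩
        + (if h : k + 1 < ℓ then -1 * x ⟨k + 1, h⟩ else 0)
        + (if h : k - 1 < ℓ ∧ 1 ≤ k then -1 * x ⟨k - 1, h.1⟩ else 0)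
        + (if k = ℓ - 2 then (-1:ℚ) else 0) * x ⟨ℓ - 1, by omega⟩ = c := by
      intro k hk
      have h0 := congrFun hx ⟨k, hk⟩
      rw [Matrix.vecMul, dotProduct] at h0
      have e2 : ∑ i, x i * A i ⟨k, hk⟩ =
          ∑ i : Fin ℓ, ((if (i:ℕ) = k then (2:ℚ) else 0) * x i
            + (if (i:ℕ) = k + 1 then (-1:ℚ) else 0) * x i
            + (if (i:ℕ) + 1 = k then (-1:ℚ) else 0) * x i
            + (if (i:ℕ) = ℓ - 1 then (if k = ℓ - 2 then (-1:ℚ) else 0) else 0) * x i) := by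
        refine Finset.sum_congr rfl fun i _ => ?_
        rw [Adec i ⟨k, hk⟩]
        ring
      rw [e2, Finset.sum_add_distrib, Finset.sum_add_distrib, Finset.sum_add_distrib] at h0
      have s4 : ∑ i : Fin ℓ,
          (if (i:ℕ) = ℓ - 1 then (if k = ℓ - 2 then (-1:ℚ) else 0) else 0) * x i
          = (if k = ℓ - 2 then (-1:ℚ) else 0) * x ⟨ℓ - 1, by omega⟩ := by
        rw [sum_ind, dif_pos (by omega : ℓ - 1 < ℓ)]
      rw [sum_ind, sum_ind, sum_ind', s4, dif_pos hk] at h0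
      exact h0
    -- linear formula up to ℓ-2
    have main : ∀ k, k < ℓ - 1 → ∀ (h : k < ℓ),
        x ⟨k, h⟩ = ((k:ℚ)+1) * x ⟨0, h0lt⟩ - c/2 * (k:ℚ) * ((k:ℚ)+1) := by
      intro k
      induction k using Nat.strong_induction_on with
      | _ k ih =>
        match k, ih with
        | 0, ih =>
          intro _ h
          norm_num
        | 1, ih =>
          intro _ h
          have E := colEq 0 (by omega)
          rw [dif_pos (show 0 + 1 < ℓ by omega), dif_neg (by omega),
            if_neg (by omega)] at E
          push_cast
          linarith [E]
        | (k+2), ih =>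
          intro hk h
          have E := colEq (k+1) (by omega)
          rw [dif_pos (show k + 1 + 1 < ℓ by omega),
            dif_pos (show k + 1 - 1 < ℓ ∧ 1 ≤ k + 1 by omega),
            if_neg (show ¬(k + 1 = ℓ - 2) by omega)] at E
          have i0 := ih k (by omega) (by omega) (by omega)
          have i1 := ih (k+1) (by omega) (by omega) (by omega)
          push_cast at i0 i1 E ⊢
          linear_combination -E + 2*i1 - i0
    -- last two columns
    have idx1 : ∀ (p : ℓ - 1 - 1 < ℓ), (⟨ℓ - 1 - 1, p⟩ : Fin ℓ) = ⟨ℓ - 2, by omega⟩ :=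
      fun p => Fin.ext (show ℓ - 1 - 1 = ℓ - 2 by omega)
    have idx2 : ∀ (p : ℓ - 2 + 1 < ℓ), (⟨ℓ - 2 + 1, p⟩ : Fin ℓ) = ⟨ℓ - 1, by omega⟩ :=
      fun p => Fin.ext (show ℓ - 2 + 1 = ℓ - 1 by omega)
    have idx3 : ∀ (p : ℓ - 2 - 1 < ℓ), (⟨ℓ - 2 - 1, p⟩ : Fin ℓ) = ⟨ℓ - 3, by omega⟩ :=
      fun p => Fin.ext (show ℓ - 2 - 1 = ℓ - 3 by omega)
    have El1 := colEq (ℓ-1) (by omega)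
    rw [dif_neg (by omega), dif_pos (show ℓ - 1 - 1 < ℓ ∧ 1 ≤ ℓ - 1 by omega),
      if_neg (by omega), idx1] at El1
    have El2 := colEq (ℓ-2) (by omega)
    rw [dif_pos (show ℓ - 2 + 1 < ℓ by omega),
      dif_pos (show ℓ - 2 - 1 < ℓ ∧ 1 ≤ ℓ - 2 by omega),
      if_pos rfl, idx2, idx3] at El2
    have m2 := main (ℓ-2) (by omega) (by omega)
    have m3 := main (ℓ-3) (by omega) (by omega)
    rw [cl2] at m2
    rw [cl3] at m3
    have hℚ : (3:ℚ) ≤ (ℓ:ℚ) := by exact_mod_cast hℓ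
    have hx0v : x ⟨0, h0lt⟩ = c * ℓ := by
      linear_combination El1 + El2 + m3 - m2
    intro k h
    by_cases hk : k = ℓ - 1
    · subst hk
      rw [if_pos rfl]
      linear_combination (El1 + m2 + ((ℓ:ℚ)-1) * hx0v) / 2
    · rw [if_neg hk]
      have m := main k (by omega) h
      linear_combination m + ((k:ℚ)+1) * hx0v
  constructor
  · rw [Matrix.isUnit_iff_isUnit_det, isUnit_iff_ne_zero]
    intro hdet
    obtain ⟨v, hv, hv0⟩ := Matrix.exists_vecMul_eq_zero_iff.mpr hdet
    apply hv
    funext j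
    have := key 0 v hv0 j.1 j.2
    simpa using this
  · intro x hx
    have hxv := key 2 x hx
    have hℚ : (3:ℚ) ≤ (ℓ:ℚ) := by exact_mod_cast hℓ
    apply le_antisymm
    · have h00 := hxv 0 h0lt
      rw [if_neg (by omega)] at h00
      have : x ⟨0, h0lt⟩ = 2 * ℓ := by rw [h00]; ring
      calc Finset.univ.inf' _ x ≤ x ⟨0, h0lt⟩ :=
            Finset.inf'_le _ (Finset.mem_univ _)
        _ = 2 * ℓ := this
    · apply Finset.le_inf'
      intro j _
      have hj := hxv j.1 j.2
      have : x ⟨j.1, j.2⟩ = x j := by congr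
      rw [this] at hj
      rw [hj]
      split_ifs with h
      · nlinarith
      · have hjℓ : ((j:ℕ):ℚ) ≤ (ℓ:ℚ) - 2 := by
          have : (j:ℕ) ≤ ℓ - 2 := by have := j.2; omega
          have h2 := (Nat.cast_le (α := ℚ)).mpr this
          rw [cl2] at h2
          exact h2
        have hj0 : (0:ℚ) ≤ ((j:ℕ):ℚ) := by positivity
        nlinarith
end

section
/- For every ℓ ≥ 2, let A be the ℓ×ℓ matrix over ℚ with A_{ii} = 2, A_{i,i+1} = A_{i+1,i} = −1 for 1 ≤ i ≤ ℓ−2, A_{ℓ−1,ℓ} = −2, A_{ℓ,ℓ−1} = −1, and all other entries 0 (the Cartan matrix of type C_ℓ, with α_ℓ the long simple root, convention A_{ij} = ⟨α_j, α_i^∨⟩). Then A is invertible, the minimum of the entries of the unique row vector x with x·A = (2, 2, …, 2) equals 2ℓ − 1, and the last entry x_ℓ (corresponding to the long simple root) equals ℓ². -/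
/-- For `ℓ ≥ 2`, the type `C_ℓ` Cartan matrix (convention `A i j = ⟨α_j, α_i^∨⟩`; in 1-indexed
notation `A_{ii} = 2`, `A_{i,i+1} = A_{i+1,i} = -1` for `1 ≤ i ≤ ℓ-2`, `A_{ℓ-1,ℓ} = -2`,
`A_{ℓ,ℓ-1} = -1`, all other entries `0`; here indices are 0-indexed, so the entry `-2` sits
at position `(ℓ-2, ℓ-1)`) is invertible over `ℚ`; the minimum of the entries of the unique
row vector `x` with `x · A = (2,…,2)` equals `2ℓ - 1`, and the last entry (corresponding to
the long simple root `α_ℓ`) equals `ℓ²`. -/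
theorem stmt3 (ℓ : ℕ) (hℓ : 2 ≤ ℓ) (A : Matrix (Fin ℓ) (Fin ℓ) ℚ)
    (hA : ∀ i j, A i j =
      if i = j then 2
      else if (i : ℕ) = ℓ - 2 ∧ (j : ℕ) = ℓ - 1 then -2
      else if (i : ℕ) + 1 = (j : ℕ) ∨ (j : ℕ) + 1 = (i : ℕ) then -1
      else 0) :
    IsUnit A ∧
      ∀ x : Fin ℓ → ℚ, Matrix.vecMul x A = (fun _ => 2) →
        Finset.univ.inf'
          (Finset.univ_nonempty_iff.mpr ⟨⟨0, by omega⟩⟩) x = (2 * ℓ - 1 : ℚ) ∧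
        x ⟨ℓ - 1, by omega⟩ = (ℓ : ℚ) ^ 2 := by
  have hAval : ∀ (a b : ℕ) (ha : a < ℓ) (hb : b < ℓ),
      A ⟨a, ha⟩ ⟨b, hb⟩ =
        if a = b then 2 else if a = ℓ - 2 ∧ b = ℓ - 1 then -2
        else if a + 1 = b ∨ b + 1 = a then -1 else 0 := by
    intro a b ha hb
    rw [hA]
    simp [Fin.ext_iff]
  have hsum : ∀ (v : Fin ℓ → ℚ) (k : Fin ℓ) (s : Finset (Fin ℓ)),
      (∀ i : Fin ℓ, i ∉ s → A i k = 0) →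
      Matrix.vecMul v A k = ∑ i ∈ s, v i * A i k := by
    intro v k s hs
    show dotProduct v (fun i => A i k) = _
    rw [dotProduct]
    exact (Finset.sum_subset (Finset.subset_univ s)
      (fun i _ hi => by rw [hs i hi, mul_zero])).symm
  -- column 0
  have col0 : ∀ v : Fin ℓ → ℚ, Matrix.vecMul v A ⟨0, by omega⟩ =
      2 * v ⟨0, by omega⟩ - v ⟨1, by omega⟩ := by
    intro v
    rw [hsum v _ ({⟨0, by omega⟩, ⟨1, by omega⟩} : Finset (Fin ℓ)) ?_]
    · rw [Finset.sum_pair (by simp [Fin.ext_iff])]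
      have e1 : A ⟨0, by omega⟩ ⟨0, by omega⟩ = 2 := by
        rw [hAval]; rw [if_pos rfl]
      have e2 : A ⟨1, by omega⟩ ⟨0, by omega⟩ = -1 := by
        rw [hAval]; rw [if_neg (by omega), if_neg (by omega), if_pos (by omega)]
      rw [e1, e2]; ring
    · intro i hi
      obtain ⟨m, hm⟩ := i
      simp only [Finset.mem_insert, Finset.mem_singleton, Fin.mk.injEq] at hi
      push_neg at hi
      rw [hAval]
      rw [if_neg (by omega), if_neg (by omega), if_neg (by omega)]
  -- last column
  have collast : ∀ v : Fin ℓ → ℚ, Matrix.vecMul v A ⟨ℓ - 1, by omega⟩ =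
      2 * v ⟨ℓ - 1, by omega⟩ - 2 * v ⟨ℓ - 2, by omega⟩ := by
    intro v
    rw [hsum v _ ({⟨ℓ - 2, by omega⟩, ⟨ℓ - 1, by omega⟩} : Finset (Fin ℓ)) ?_]
    · rw [Finset.sum_pair (by simp only [ne_eq, Fin.mk.injEq]; omega)]
      have e1 : A ⟨ℓ - 2, by omega⟩ ⟨ℓ - 1, by omega⟩ = -2 := by
        rw [hAval]; rw [if_neg (by omega), if_pos (by omega)]
      have e2 : A ⟨ℓ - 1, by omega⟩ ⟨ℓ - 1, by omega⟩ = 2 := by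
        rw [hAval]; rw [if_pos rfl]
      rw [e1, e2]; ring
    · intro i hi
      obtain ⟨m, hm⟩ := i
      simp only [Finset.mem_insert, Finset.mem_singleton, Fin.mk.injEq] at hi
      push_neg at hi
      rw [hAval]
      rw [if_neg (by omega), if_neg (by omega), if_neg (by omega)]
  -- middle columns
  have colmid : ∀ (v : Fin ℓ → ℚ) (n : ℕ), 1 ≤ n → ∀ _h2 : n < ℓ - 1,
      Matrix.vecMul v A ⟨n, by omega⟩ =
        2 * v ⟨n, by omega⟩ - v ⟨n - 1, by omega⟩ - v ⟨n + 1, by omega⟩ := by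
    intro v n h1 h2
    rw [hsum v _ ({⟨n - 1, by omega⟩, ⟨n, by omega⟩, ⟨n + 1, by omega⟩} :
        Finset (Fin ℓ)) ?_]
    · rw [Finset.sum_insert (by
        simp only [Finset.mem_insert, Finset.mem_singleton, Fin.mk.injEq]; omega),
        Finset.sum_pair (by simp only [ne_eq, Fin.mk.injEq]; omega)]
      have e1 : A ⟨n - 1, by omega⟩ ⟨n, by omega⟩ = -1 := by
        rw [hAval]; rw [if_neg (by omega), if_neg (by omega), if_pos (by omega)]
      have e2 : A ⟨n, by omega⟩ ⟨n, by omega⟩ = 2 := by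
        rw [hAval]; rw [if_pos rfl]
      have e3 : A ⟨n + 1, by omega⟩ ⟨n, by omega⟩ = -1 := by
        rw [hAval]; rw [if_neg (by omega), if_neg (by omega), if_pos (by omega)]
      rw [e1, e2, e3]; ring
    · intro i hi
      obtain ⟨m, hm⟩ := i
      simp only [Finset.mem_insert, Finset.mem_singleton, Fin.mk.injEq] at hi
      push_neg at hi
      rw [hAval]
      rw [if_neg (by omega), if_neg (by omega), if_neg (by omega)]
  -- the explicit solution
  obtain ⟨y, hydef⟩ : ∃ y : Fin ℓ → ℚ, ∀ (n : ℕ) (hn : n < ℓ),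
      y ⟨n, hn⟩ = ((n : ℚ) + 1) * (2 * (ℓ : ℚ) - 1 - (n : ℚ)) :=
    ⟨fun j => ((j : ℚ) + 1) * (2 * (ℓ : ℚ) - 1 - (j : ℚ)), fun n hn => rfl⟩
  have hy : Matrix.vecMul y A = (fun _ => 2) := by
    funext k
    obtain ⟨n, hn⟩ := k
    rcases eq_or_ne n 0 with rfl | hn0
    · rw [col0 y, hydef 0 (by omega), hydef 1 (by omega)]
      push_cast
      ring
    · rcases eq_or_ne n (ℓ - 1) with rfl | hnl
      · rw [collast y, hydef (ℓ - 1) (by omega), hydef (ℓ - 2) (by omega)]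
        rw [Nat.cast_sub (by omega : 1 ≤ ℓ), Nat.cast_sub (by omega : 2 ≤ ℓ)]
        push_cast
        ring
      · rw [colmid y n (by omega) (by omega), hydef n (by omega),
          hydef (n - 1) (by omega), hydef (n + 1) (by omega)]
        rw [Nat.cast_sub (by omega : 1 ≤ n)]
        push_cast
        ring
  -- kernel is trivial
  have hker : ∀ v : Fin ℓ → ℚ, Matrix.vecMul v A = 0 → v = 0 := by
    intro v hv
    have h0 : ∀ n, ∀ hn : n < ℓ, v ⟨n, hn⟩ = ((n : ℚ) + 1) * v ⟨0, by omega⟩ := by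
      intro n
      induction n using Nat.twoStepInduction with
      | zero => intro hn; norm_num
      | one =>
        intro hn
        have hc := congrFun hv ⟨0, by omega⟩
        rw [col0 v] at hc
        have hz : (0 : Fin ℓ → ℚ) ⟨0, by omega⟩ = 0 := rfl
        rw [hz] at hc
        push_cast
        linarith [hc]
      | more m ih1 ih2 =>
        intro hn
        have hc := congrFun hv ⟨m + 1, by omega⟩
        rw [colmid v (m + 1) (by omega) (by omega)] at hc
        have hz : (0 : Fin ℓ → ℚ) ⟨m + 1, by omega⟩ = 0 := rfl
        rw [hz] at hc
        simp only [Nat.add_sub_cancel] at hc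
        have i1 := ih1 (by omega : m < ℓ)
        have i2 := ih2 (by omega : m + 1 < ℓ)
        have e2 : (⟨m + 1 + 1, by omega⟩ : Fin ℓ) = ⟨m + 2, hn⟩ := rfl
        rw [e2, i1, i2] at hc
        push_cast at hc ⊢
        linarith [hc]
    have hl := congrFun hv ⟨ℓ - 1, by omega⟩
    rw [collast v] at hl
    have hz : (0 : Fin ℓ → ℚ) ⟨ℓ - 1, by omega⟩ = 0 := rfl
    rw [hz, h0 (ℓ - 1) (by omega), h0 (ℓ - 2) (by omega)] at hl
    rw [Nat.cast_sub (by omega : 1 ≤ ℓ), Nat.cast_sub (by omega : 2 ≤ ℓ)] at hl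
    push_cast at hl
    have hv0 : v ⟨0, by omega⟩ = 0 := by linear_combination hl / 2
    funext i
    obtain ⟨n, hn⟩ := i
    rw [h0 n hn, hv0, mul_zero]
    rfl
  have hunit : IsUnit A := by
    rw [← Matrix.vecMul_injective_iff_isUnit]
    intro a b hab
    have hz : Matrix.vecMul (a - b) A = 0 := by
      rw [Matrix.sub_vecMul]
      rw [show Matrix.vecMul a A = Matrix.vecMul b A from hab]
      simp
    exact sub_eq_zero.mp (hker _ hz)
  refine ⟨hunit, ?_⟩
  intro x hx
  have hxy : x = y := by
    have hz : Matrix.vecMul (x - y) A = 0 := by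
      rw [Matrix.sub_vecMul, hx, hy]
      simp
    exact sub_eq_zero.mp (hker _ hz)
  subst hxy
  have hℓQ : (2 : ℚ) ≤ (ℓ : ℚ) := by exact_mod_cast hℓ
  constructor
  · apply le_antisymm
    · have h1 := Finset.inf'_le (b := (⟨0, by omega⟩ : Fin ℓ))
        (f := x) (Finset.mem_univ _)
      rw [hydef 0 (by omega)] at h1
      calc Finset.univ.inf' _ x ≤ ((0 : ℚ) + 1) * (2 * (ℓ : ℚ) - 1 - 0) := h1
        _ = 2 * (ℓ : ℚ) - 1 := by ring
    · apply Finset.le_inf'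
      intro i _
      have hi := hydef i.1 i.2
      rw [Fin.eta] at hi
      rw [hi]
      have h1 : ((i : ℕ) : ℚ) ≤ (ℓ : ℚ) - 1 := by
        have : (i : ℕ) ≤ ℓ - 1 := by omega
        have := (Nat.cast_le (α := ℚ)).mpr this
        rw [Nat.cast_sub (by omega : 1 ≤ ℓ)] at this
        simpa using this
      have h2 : (0 : ℚ) ≤ ((i : ℕ) : ℚ) := by positivity
      nlinarith [mul_nonneg h2 (by linarith : (0 : ℚ) ≤ 2 * (ℓ : ℚ) - 2 - ((i : ℕ) : ℚ))]
  · rw [hydef (ℓ - 1) (by omega)]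
    rw [Nat.cast_sub (by omega : 1 ≤ ℓ)]
    push_cast
    ring
end

section
/- Let A be a block-diagonal matrix over ℚ whose diagonal blocks are Cartan matrices of the following types: A_ℓ with ℓ ≥ 2 (tridiagonal with 2 on the diagonal and −1 on the off-diagonals), B_ℓ with ℓ ≥ 3 (as type A but with A_{ℓ,ℓ−1} = −2), C_ℓ with ℓ ≥ 2 (as type A but with A_{ℓ−1,ℓ} = −2), D_ℓ with ℓ ≥ 4 (nodes ℓ−1 and ℓ each joined to node ℓ−2), E6, E7, E8, F4, or G2 (the explicit exceptional Cartan matrices). Then A is invertible and every entry of the unique row vector x with x·A = (2, 2, …, 2) is at least 2. (Equivalently: if a semisimple root system has no simple component of rank 1, then every fundamental weight takes value at least 2 on the principal coweight h_0.) -/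
/-- The Cartan matrix of type `A_n` (`n ≥ 2`): `2` on the diagonal, `-1` at adjacent
positions, `0` elsewhere. -/
def IsCartanTypeA (n : ℕ) (M : Matrix (Fin n) (Fin n) ℚ) : Prop :=
  2 ≤ n ∧ ∀ i j, M i j =
    if i = j then 2
    else if (i : ℕ) + 1 = (j : ℕ) ∨ (j : ℕ) + 1 = (i : ℕ) then -1
    else 0

/-- The Cartan matrix of type `B_n` (`n ≥ 3`): as type `A` but with entry `-2` at the
(0-indexed) position `(n-1, n-2)`, i.e. `A_{n,n-1} = -2` in 1-indexed notation. -/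
def IsCartanTypeB (n : ℕ) (M : Matrix (Fin n) (Fin n) ℚ) : Prop :=
  3 ≤ n ∧ ∀ i j, M i j =
    if i = j then 2
    else if (i : ℕ) = n - 1 ∧ (j : ℕ) = n - 2 then -2
    else if (i : ℕ) + 1 = (j : ℕ) ∨ (j : ℕ) + 1 = (i : ℕ) then -1
    else 0

/-- The Cartan matrix of type `C_n` (`n ≥ 2`): as type `A` but with entry `-2` at the
(0-indexed) position `(n-2, n-1)`, i.e. `A_{n-1,n} = -2` in 1-indexed notation. -/
def IsCartanTypeC (n : ℕ) (M : Matrix (Fin n) (Fin n) ℚ) : Prop :=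
  2 ≤ n ∧ ∀ i j, M i j =
    if i = j then 2
    else if (i : ℕ) = n - 2 ∧ (j : ℕ) = n - 1 then -2
    else if (i : ℕ) + 1 = (j : ℕ) ∨ (j : ℕ) + 1 = (i : ℕ) then -1
    else 0

/-- The Cartan matrix of type `D_n` (`n ≥ 4`): the last two nodes are each joined to node
`n-2` (1-indexed) and not to each other. -/
def IsCartanTypeD (n : ℕ) (M : Matrix (Fin n) (Fin n) ℚ) : Prop :=
  4 ≤ n ∧ ∀ i j, M i j =
    if i = j then 2
    else if ((i : ℕ) + 1 = (j : ℕ) ∧ (j : ℕ) ≤ n - 2) ∨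
            ((j : ℕ) + 1 = (i : ℕ) ∧ (i : ℕ) ≤ n - 2) then -1
    else if ((i : ℕ) = n - 3 ∧ (j : ℕ) = n - 1) ∨
            ((j : ℕ) = n - 3 ∧ (i : ℕ) = n - 1) then -1
    else 0

/-- The Cartan matrix of one of the exceptional types `E₆`, `E₇`, `E₈`, `F₄`, `G₂`. -/
def IsCartanExceptional (n : ℕ) (M : Matrix (Fin n) (Fin n) ℚ) : Prop :=
  (∃ h : n = 6, ∀ i j, M i j = (CartanMatrix.E₆ (Fin.cast h i) (Fin.cast h j) : ℚ)) ∨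
  (∃ h : n = 7, ∀ i j, M i j = (CartanMatrix.E₇ (Fin.cast h i) (Fin.cast h j) : ℚ)) ∨
  (∃ h : n = 8, ∀ i j, M i j = (CartanMatrix.E₈ (Fin.cast h i) (Fin.cast h j) : ℚ)) ∨
  (∃ h : n = 4, ∀ i j, M i j = (CartanMatrix.F₄ (Fin.cast h i) (Fin.cast h j) : ℚ)) ∨
  (∃ h : n = 2, ∀ i j, M i j = (CartanMatrix.G₂ (Fin.cast h i) (Fin.cast h j) : ℚ))

namespace Stmt16Aux

variable {n : ℕ}

/-- extend a vector on `Fin n` to `ℕ` by zero. -/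
def extv (n : ℕ) (y : Fin n → ℚ) (m : ℕ) : ℚ :=
  if h : m < n then y ⟨m, h⟩ else 0

lemma extv_ge (y : Fin n → ℚ) {m : ℕ} (h : n ≤ m) : extv n y m = 0 := by
  simp [extv, Nat.not_lt.2 h]

lemma extv_lt (y : Fin n → ℚ) {m : ℕ} (h : m < n) : extv n y m = y ⟨m, h⟩ := by
  simp [extv, h]

lemma extv_comp (w : ℕ → ℚ) {m : ℕ} (h : m < n) :
    extv n (fun j : Fin n => w (j : ℕ)) m = w m := by
  rw [extv_lt _ h]

/-- index of the predecessor; `n` (a dead index) for `j = 0`. -/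
def pidx (n j : ℕ) : ℕ := if j = 0 then n else j - 1

@[simp] lemma pidx_zero : pidx n 0 = n := by simp [pidx]

@[simp] lemma pidx_succ (k : ℕ) : pidx n (k + 1) = k := by simp [pidx]

lemma sum_ind (y : Fin n → ℚ) (a : ℕ) (q : ℚ) :
    (∑ i : Fin n, y i * (if (i : ℕ) = a then q else 0)) = q * extv n y a := by
  by_cases h : a < n
  · rw [extv_lt y h]
    rw [Finset.sum_eq_single ⟨a, h⟩]
    · simp [mul_comm]
    · intro b _ hb
      have : (b : ℕ) ≠ a := fun hc => hb (Fin.ext hc)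
      simp [this]
    · simp
  · rw [extv_ge y (Nat.not_lt.1 h)]
    rw [Finset.sum_eq_zero]
    · ring
    · intro b _
      have : (b : ℕ) ≠ a := by omega
      simp [this]

lemma vecMul_col4 (M : Matrix (Fin n) (Fin n) ℚ) (y : Fin n → ℚ) (j : Fin n)
    (a b c d : ℕ) (α β γ δ : ℚ)
    (hcol : ∀ i : Fin n, M i j =
      (if (i : ℕ) = a then α else 0) + (if (i : ℕ) = b then β else 0) +
      (if (i : ℕ) = c then γ else 0) + (if (i : ℕ) = d then δ else 0)) :
    Matrix.vecMul y M j =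
      α * extv n y a + β * extv n y b + γ * extv n y c + δ * extv n y d := by
  have : Matrix.vecMul y M j = ∑ i : Fin n, y i * M i j := by
    simp [Matrix.vecMul, dotProduct]
  rw [this]
  simp_rw [hcol, mul_add, Finset.sum_add_distrib, sum_ind]

lemma vecMul_col3 (M : Matrix (Fin n) (Fin n) ℚ) (y : Fin n → ℚ) (j : Fin n)
    (a b c : ℕ) (α β γ : ℚ)
    (hcol : ∀ i : Fin n, M i j =
      (if (i : ℕ) = a then α else 0) + (if (i : ℕ) = b then β else 0) +
      (if (i : ℕ) = c then γ else 0)) :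
    Matrix.vecMul y M j = α * extv n y a + β * extv n y b + γ * extv n y c := by
  have := vecMul_col4 M y j a b c n α β γ 0 (by intro i; have := hcol i; simp [this])
  simpa using this

lemma vecMul_col2 (M : Matrix (Fin n) (Fin n) ℚ) (y : Fin n → ℚ) (j : Fin n)
    (a b : ℕ) (α β : ℚ)
    (hcol : ∀ i : Fin n, M i j =
      (if (i : ℕ) = a then α else 0) + (if (i : ℕ) = b then β else 0)) :
    Matrix.vecMul y M j = α * extv n y a + β * extv n y b := by
  have := vecMul_col3 M y j a b n α β 0 (by intro i; have := hcol i; simp [this])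
  simpa using this

/-- A standard type-A column decomposes into indicators. -/
lemma colA_shape (M : Matrix (Fin n) (Fin n) ℚ) (j : Fin n)
    (hc : ∀ i : Fin n, M i j =
      if i = j then 2
      else if (i : ℕ) + 1 = (j : ℕ) ∨ (j : ℕ) + 1 = (i : ℕ) then -1
      else 0) :
    ∀ i : Fin n, M i j =
      (if (i : ℕ) = (j : ℕ) then 2 else 0) +
      (if (i : ℕ) = pidx n (j : ℕ) then -1 else 0) +
      (if (i : ℕ) = (j : ℕ) + 1 then -1 else 0) := by
  intro i
  rw [hc i]
  have hij : (i = j) ↔ ((i : ℕ) = (j : ℕ)) := Fin.ext_iff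
  have hin : (i : ℕ) < n := i.isLt
  unfold pidx
  simp only [hij]
  split_ifs <;> first | omega | norm_num

/-- evaluation of a standard type-A column of `vecMul`. -/
lemma vecMul_colA (M : Matrix (Fin n) (Fin n) ℚ) (y : Fin n → ℚ) (j : Fin n)
    (hc : ∀ i : Fin n, M i j =
      if i = j then 2
      else if (i : ℕ) + 1 = (j : ℕ) ∨ (j : ℕ) + 1 = (i : ℕ) then -1
      else 0) :
    Matrix.vecMul y M j =
      2 * extv n y (j : ℕ) - extv n y (pidx n (j : ℕ)) - extv n y ((j : ℕ) + 1) := by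
  have := vecMul_col3 M y j (j : ℕ) (pidx n (j : ℕ)) ((j : ℕ) + 1) 2 (-1) (-1)
    (colA_shape M j hc)
  rw [this]; ring

/-- chain recursion -/
lemma chain (Y : ℕ → ℚ) (L : ℕ)
    (h : ∀ m, m < L → Y (m + 1) = 2 * Y m - (if m = 0 then 0 else Y (m - 1))) :
    ∀ m, m ≤ L → Y m = (m + 1) * Y 0 := by
  intro m
  induction m using Nat.strong_induction_on with
  | _ m ih =>
    match m with
    | 0 => intro _; push_cast; ring
    | 1 =>
      intro h1
      have := h 0 (by omega)
      simp at this
      push_cast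
      linarith
    | (k+2) =>
      intro hk
      have e := h (k+1) (by omega)
      have i1 := ih (k+1) (by omega) (by omega)
      have i2 := ih k (by omega) (by omega)
      simp only [Nat.add_sub_cancel, if_neg (Nat.succ_ne_zero k)] at e
      push_cast at i1 i2 ⊢
      linear_combination e + 2 * i1 - i2

/-- the Good property we prove for each block. -/
def Good (n : ℕ) (M : Matrix (Fin n) (Fin n) ℚ) : Prop :=
  IsUnit M ∧ ∀ y : Fin n → ℚ, Matrix.vecMul y M = (fun _ => 2) → ∀ j, 2 ≤ y j

lemma isUnit_of_ker (M : Matrix (Fin n) (Fin n) ℚ)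
    (hker : ∀ y, Matrix.vecMul y M = 0 → y = 0) : IsUnit M := by
  rw [← Matrix.vecMul_injective_iff_isUnit]
  intro a b hab
  have h0 : Matrix.vecMul (a - b) M = 0 := by
    rw [Matrix.sub_vecMul]
    change Matrix.vecMul a M - Matrix.vecMul b M = 0
    change M.vecMul a = M.vecMul b at hab
    rw [hab]; simp
  have := hker _ h0
  funext i
  have := congr_fun this i
  simp only [Pi.sub_apply, Pi.zero_apply] at this
  linarith

lemma good_of_ker_sol (M : Matrix (Fin n) (Fin n) ℚ)
    (hker : ∀ y, Matrix.vecMul y M = 0 → y = 0)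
    (v : Fin n → ℚ) (hv : Matrix.vecMul v M = fun _ => 2) (hb : ∀ j, 2 ≤ v j) :
    Good n M := by
  refine ⟨isUnit_of_ker M hker, ?_⟩
  intro y hy j
  have h0 : Matrix.vecMul (y - v) M = 0 := by
    rw [Matrix.sub_vecMul, hy, hv]; simp
  have := congr_fun (hker _ h0) j
  simp only [Pi.sub_apply, Pi.zero_apply] at this
  have := hb j
  linarith


lemma goodA (M : Matrix (Fin n) (Fin n) ℚ) (h : IsCartanTypeA n M) : Good n M := by
  obtain ⟨hn, hM⟩ := h
  have col : ∀ (y : Fin n → ℚ) (j : Fin n), Matrix.vecMul y M j =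
      2 * extv n y (j : ℕ) - extv n y (pidx n (j : ℕ)) - extv n y ((j : ℕ) + 1) :=
    fun y j => vecMul_colA M y j (fun i => hM i j)
  -- kernel
  have hker : ∀ y, Matrix.vecMul y M = 0 → y = 0 := by
    intro y hy
    have hchain : ∀ m, m < n →
        extv n y (m + 1) = 2 * extv n y m - (if m = 0 then 0 else extv n y (m - 1)) := by
      intro m hm
      have e := congr_fun hy ⟨m, hm⟩
      rw [col y ⟨m, hm⟩] at e
      simp only [Pi.zero_apply] at e
      match m with
      | 0 =>
        rw [pidx_zero, extv_ge y (le_refl n)] at e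
        rw [if_pos rfl]
        linarith [e]
      | (k+1) =>
        rw [pidx_succ] at e
        simp only [Nat.add_sub_cancel, if_neg (Nat.succ_ne_zero k)]
        linarith [e]
    have hall := chain (extv n y) n hchain
    have h0 : extv n y 0 = 0 := by
      have hn0 := hall n (le_refl n)
      rw [extv_ge y (le_refl n)] at hn0
      rcases mul_eq_zero.mp hn0.symm with h | h
      · exfalso
        have : (0:ℚ) < (n : ℚ) + 1 := by positivity
        linarith
      · exact h
    funext j
    have hj := hall (j : ℕ) (le_of_lt j.isLt)
    rw [extv_lt y j.isLt] at hj
    simp only [Fin.eta] at hj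
    rw [hj, h0]
    simp
  -- explicit solution
  set v : Fin n → ℚ := fun j => ((j : ℚ) + 1) * ((n : ℚ) - (j : ℚ)) with hvdef
  have hv' : ∀ (m : ℕ) (h : m < n), extv n v m = ((m : ℚ) + 1) * ((n : ℚ) - (m : ℚ)) := by
    intro m h
    rw [extv_lt v h, hvdef]
  have hvsol : Matrix.vecMul v M = fun _ => 2 := by
    funext j
    rw [col v j]
    have hjn : (j : ℕ) < n := j.isLt
    match hm : (j : ℕ), hjn with
    | 0, hjn =>
      rw [pidx_zero, extv_ge v (le_refl n), hv' 0 (by omega), hv' 1 (by omega)]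
      push_cast
      ring
    | (k+1), hjn =>
      rw [pidx_succ, hv' (k+1) hjn, hv' k (by omega)]
      by_cases hlast : k + 1 + 1 < n
      · rw [hv' (k+2) hlast]
        push_cast
        ring
      · have hk : k + 2 = n := by omega
        rw [extv_ge v (by omega)]
        have hcast : (n : ℚ) = (k : ℚ) + 2 := by exact_mod_cast congrArg (Nat.cast : ℕ → ℚ) hk.symm
        rw [hcast]
        push_cast
        ring
  have hvb : ∀ j, 2 ≤ v j := by
    intro j
    have hjn : (j : ℕ) < n := j.isLt
    have h1 : ((j : ℚ)) + 1 ≤ (n : ℚ) := by exact_mod_cast hjn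
    have h2 : (0 : ℚ) ≤ (j : ℚ) := by positivity
    have h3 : (2 : ℚ) ≤ (n : ℚ) := by exact_mod_cast hn
    show 2 ≤ ((j : ℚ) + 1) * ((n : ℚ) - (j : ℚ))
    rcases Nat.eq_zero_or_pos (j : ℕ) with h0 | h0
    · have : ((j:ℕ) : ℚ) = 0 := by exact_mod_cast h0
      rw [this]; linarith
    · have : (1 : ℚ) ≤ (j : ℚ) := by exact_mod_cast h0
      nlinarith
  exact good_of_ker_sol M hker v hvsol hvb



lemma goodB (M : Matrix (Fin n) (Fin n) ℚ) (h : IsCartanTypeB n M) : Good n M := by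
  obtain ⟨hn, hM⟩ := h
  obtain ⟨q, rfl⟩ : ∃ q, n = q + 3 := ⟨n - 3, by omega⟩
  have colA : ∀ (y : Fin (q+3) → ℚ) (j : Fin (q+3)), (j : ℕ) ≠ q + 1 →
      Matrix.vecMul y M j =
      2 * extv (q+3) y (j : ℕ) - extv (q+3) y (pidx (q+3) (j : ℕ))
        - extv (q+3) y ((j : ℕ) + 1) := by
    intro y j hj
    refine vecMul_colA M y j (fun i => ?_)
    rw [hM i j]
    have hij : (i = j) ↔ ((i : ℕ) = (j : ℕ)) := Fin.ext_iff
    simp only [hij]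
    split_ifs <;> first | omega | norm_num
  have colS : ∀ (y : Fin (q+3) → ℚ) (j : Fin (q+3)), (j : ℕ) = q + 1 →
      Matrix.vecMul y M j =
      2 * extv (q+3) y (q + 1) + (-1) * extv (q+3) y q + (-2) * extv (q+3) y (q + 2) := by
    intro y j hj
    refine vecMul_col3 M y j (q+1) q (q+2) 2 (-1) (-2) (fun i => ?_)
    rw [hM i j]
    have hij : (i = j) ↔ ((i : ℕ) = (j : ℕ)) := Fin.ext_iff
    have hin : (i : ℕ) < q + 3 := i.isLt
    simp only [hij, hj]
    split_ifs <;> first | omega | norm_num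
  have hker : ∀ y, Matrix.vecMul y M = 0 → y = 0 := by
    intro y hy
    have hchain : ∀ m, m < q + 1 →
        extv (q+3) y (m + 1) =
          2 * extv (q+3) y m - (if m = 0 then 0 else extv (q+3) y (m - 1)) := by
      intro m hm
      have e := congr_fun hy ⟨m, by omega⟩
      rw [colA y ⟨m, by omega⟩ (by show m ≠ q + 1; omega)] at e
      simp only [Pi.zero_apply] at e
      match m with
      | 0 =>
        rw [pidx_zero, extv_ge y (le_refl (q+3))] at e
        rw [if_pos rfl]
        linarith [e]
      | (k+1) =>
        rw [pidx_succ] at e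
        simp only [Nat.add_sub_cancel, if_neg (Nat.succ_ne_zero k)]
        linarith [e]
    have hall := chain (extv (q+3) y) (q+1) hchain
    have e1 := congr_fun hy ⟨q+2, by omega⟩
    rw [colA y ⟨q+2, by omega⟩ (by show q + 2 ≠ q + 1; omega)] at e1
    simp only [Pi.zero_apply, pidx_succ] at e1
    rw [extv_ge y (by omega : q + 3 ≤ q + 2 + 1)] at e1
    have e2 := congr_fun hy ⟨q+1, by omega⟩
    rw [colS y ⟨q+1, by omega⟩ rfl] at e2
    simp only [Pi.zero_apply] at e2
    have hq1 := hall (q+1) (le_refl _)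
    have hq0 := hall q (by omega)
    have h0 : extv (q+3) y 0 = 0 := by
      push_cast at hq1 hq0
      nlinarith [e1, e2, hq1, hq0]
    have hzero : ∀ m, m < q + 3 → extv (q+3) y m = 0 := by
      intro m hm
      rcases Nat.lt_or_ge m (q+2) with hlt | hge
      · rw [hall m (by omega), h0]; ring
      · have hm2 : m = q + 2 := by omega
        subst hm2
        rw [hq1, h0, mul_zero] at e1
        linarith [e1]
    funext j
    have := hzero (j : ℕ) j.isLt
    rw [extv_lt y j.isLt] at this
    simpa using this
  -- explicit solution
  set w : ℕ → ℚ := fun m =>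
    if m = q + 2 then ((q : ℚ) + 3) * ((q : ℚ) + 4) / 2
    else -(m : ℚ)^2 + (2*(q : ℚ) + 5) * (m : ℚ) + 2*(q : ℚ) + 6 with hwdef
  set v : Fin (q+3) → ℚ := fun j => w (j : ℕ) with hvdef
  have hvp : ∀ (m : ℕ), m < q + 2 →
      extv (q+3) v m = -(m : ℚ)^2 + (2*(q : ℚ) + 5) * (m : ℚ) + 2*(q : ℚ) + 6 := by
    intro m hm
    rw [hvdef, extv_comp w (by omega), hwdef]
    simp only
    rw [if_neg (by omega)]
  have hvl : extv (q+3) v (q + 2) = ((q : ℚ) + 3) * ((q : ℚ) + 4) / 2 := by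
    rw [hvdef, extv_comp w (by omega), hwdef]
    simp
  have hvsol : Matrix.vecMul v M = fun _ => 2 := by
    funext j
    have hjn : (j : ℕ) < q + 3 := j.isLt
    rcases Nat.lt_or_ge (j : ℕ) (q+1) with hj | hj
    · rw [colA v j (by omega)]
      match hm : (j : ℕ), hj with
      | 0, hj =>
        rw [pidx_zero, extv_ge v (le_refl (q+3)), hvp 0 (by omega), hvp 1 (by omega)]
        push_cast
        ring
      | (k+1), hj =>
        rw [pidx_succ, hvp (k+1) (by omega), hvp k (by omega), hvp (k+2) (by omega)]
        push_cast
        ring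
    · rcases Nat.eq_or_lt_of_le hj with hj1 | hj1
      · rw [colS v j hj1.symm, hvp (q+1) (by omega), hvp q (by omega), hvl]
        push_cast
        ring
      · have hj2 : (j : ℕ) = q + 2 := by omega
        rw [colA v j (by omega), hj2, pidx_succ, extv_ge v (by omega : q + 3 ≤ q + 2 + 1),
          hvl, hvp (q+1) (by omega)]
        push_cast
        ring
  have hvb : ∀ j, 2 ≤ v j := by
    intro j
    have hjn : (j : ℕ) < q + 3 := j.isLt
    have hq0 : (0 : ℚ) ≤ (q : ℚ) := by positivity
    rw [hvdef]
    simp only [hwdef]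
    split_ifs with hc
    · nlinarith
    · have h1 : ((j : ℕ) : ℚ) ≤ (q : ℚ) + 1 := by
        have : (j : ℕ) ≤ q + 1 := by omega
        exact_mod_cast this
      have h2 : (0 : ℚ) ≤ ((j : ℕ) : ℚ) := by positivity
      nlinarith
  exact good_of_ker_sol M hker v hvsol hvb



lemma goodC (M : Matrix (Fin n) (Fin n) ℚ) (h : IsCartanTypeC n M) : Good n M := by
  obtain ⟨hn, hM⟩ := h
  obtain ⟨q, rfl⟩ : ∃ q, n = q + 2 := ⟨n - 2, by omega⟩
  have colA : ∀ (y : Fin (q+2) → ℚ) (j : Fin (q+2)), (j : ℕ) ≠ q + 1 →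
      Matrix.vecMul y M j =
      2 * extv (q+2) y (j : ℕ) - extv (q+2) y (pidx (q+2) (j : ℕ))
        - extv (q+2) y ((j : ℕ) + 1) := by
    intro y j hj
    refine vecMul_colA M y j (fun i => ?_)
    rw [hM i j]
    have hij : (i = j) ↔ ((i : ℕ) = (j : ℕ)) := Fin.ext_iff
    simp only [hij]
    split_ifs <;> first | omega | norm_num
  have colS : ∀ (y : Fin (q+2) → ℚ) (j : Fin (q+2)), (j : ℕ) = q + 1 →
      Matrix.vecMul y M j =
      2 * extv (q+2) y (q + 1) + (-2) * extv (q+2) y q := by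
    intro y j hj
    refine vecMul_col2 M y j (q+1) q 2 (-2) (fun i => ?_)
    rw [hM i j]
    have hij : (i = j) ↔ ((i : ℕ) = (j : ℕ)) := Fin.ext_iff
    have hin : (i : ℕ) < q + 2 := i.isLt
    simp only [hij, hj]
    split_ifs <;> first | omega | norm_num
  have hker : ∀ y, Matrix.vecMul y M = 0 → y = 0 := by
    intro y hy
    have hchain : ∀ m, m < q + 1 →
        extv (q+2) y (m + 1) =
          2 * extv (q+2) y m - (if m = 0 then 0 else extv (q+2) y (m - 1)) := by
      intro m hm
      have e := congr_fun hy ⟨m, by omega⟩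
      rw [colA y ⟨m, by omega⟩ (by show m ≠ q + 1; omega)] at e
      simp only [Pi.zero_apply] at e
      match m with
      | 0 =>
        rw [pidx_zero, extv_ge y (le_refl (q+2))] at e
        rw [if_pos rfl]
        linarith [e]
      | (k+1) =>
        rw [pidx_succ] at e
        simp only [Nat.add_sub_cancel, if_neg (Nat.succ_ne_zero k)]
        linarith [e]
    have hall := chain (extv (q+2) y) (q+1) hchain
    have e1 := congr_fun hy ⟨q+1, by omega⟩
    rw [colS y ⟨q+1, by omega⟩ rfl] at e1
    simp only [Pi.zero_apply] at e1
    have hq1 := hall (q+1) (le_refl _)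
    have hq0 := hall q (by omega)
    have h0 : extv (q+2) y 0 = 0 := by
      push_cast at hq1 hq0
      nlinarith [e1, hq1, hq0]
    funext j
    have hj := hall (j : ℕ) (by omega)
    rw [extv_lt y j.isLt] at hj
    simp only [Fin.eta] at hj
    rw [hj, h0]
    simp
  set w : ℕ → ℚ := fun m =>
    -(m : ℚ)^2 + (2*(q : ℚ) + 2) * (m : ℚ) + 2*(q : ℚ) + 3 with hwdef
  set v : Fin (q+2) → ℚ := fun j => w (j : ℕ) with hvdef
  have hvp : ∀ (m : ℕ), m < q + 2 →
      extv (q+2) v m = -(m : ℚ)^2 + (2*(q : ℚ) + 2) * (m : ℚ) + 2*(q : ℚ) + 3 := by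
    intro m hm
    rw [hvdef, extv_comp w hm, hwdef]
  have hvsol : Matrix.vecMul v M = fun _ => 2 := by
    funext j
    have hjn : (j : ℕ) < q + 2 := j.isLt
    rcases Nat.lt_or_ge (j : ℕ) (q+1) with hj | hj
    · rw [colA v j (by omega)]
      match hm : (j : ℕ), hj with
      | 0, hj =>
        rw [pidx_zero, extv_ge v (le_refl (q+2)), hvp 0 (by omega), hvp 1 (by omega)]
        push_cast
        ring
      | (k+1), hj =>
        rw [pidx_succ, hvp (k+1) (by omega), hvp k (by omega), hvp (k+2) (by omega)]
        push_cast
        ring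
    · have hj1 : (j : ℕ) = q + 1 := by omega
      rw [colS v j hj1, hvp (q+1) (by omega), hvp q (by omega)]
      push_cast
      ring
  have hvb : ∀ j, 2 ≤ v j := by
    intro j
    have hjn : (j : ℕ) < q + 2 := j.isLt
    have hq0 : (0 : ℚ) ≤ (q : ℚ) := by positivity
    have h1 : ((j : ℕ) : ℚ) ≤ (q : ℚ) + 1 := by
      have : (j : ℕ) ≤ q + 1 := by omega
      exact_mod_cast this
    have h2 : (0 : ℚ) ≤ ((j : ℕ) : ℚ) := by positivity
    rw [hvdef]
    simp only [hwdef]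
    nlinarith
  exact good_of_ker_sol M hker v hvsol hvb


lemma goodD (M : Matrix (Fin n) (Fin n) ℚ) (h : IsCartanTypeD n M) : Good n M := by
  obtain ⟨hn, hM⟩ := h
  obtain ⟨q, rfl⟩ : ∃ q, n = q + 4 := ⟨n - 4, by omega⟩
  have colA : ∀ (y : Fin (q+4) → ℚ) (j : Fin (q+4)), (j : ℕ) ≤ q →
      Matrix.vecMul y M j =
      2 * extv (q+4) y (j : ℕ) - extv (q+4) y (pidx (q+4) (j : ℕ))
        - extv (q+4) y ((j : ℕ) + 1) := by
    intro y j hj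
    refine vecMul_colA M y j (fun i => ?_)
    rw [hM i j]
    have hij : (i = j) ↔ ((i : ℕ) = (j : ℕ)) := Fin.ext_iff
    have hin : (i : ℕ) < q + 4 := i.isLt
    simp only [hij]
    split_ifs <;> first | omega | norm_num
  have colS1 : ∀ (y : Fin (q+4) → ℚ) (j : Fin (q+4)), (j : ℕ) = q + 1 →
      Matrix.vecMul y M j =
      2 * extv (q+4) y (q+1) + (-1) * extv (q+4) y q + (-1) * extv (q+4) y (q+2)
        + (-1) * extv (q+4) y (q+3) := by
    intro y j hj
    refine vecMul_col4 M y j (q+1) q (q+2) (q+3) 2 (-1) (-1) (-1) (fun i => ?_)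
    rw [hM i j]
    have hij : (i = j) ↔ ((i : ℕ) = (j : ℕ)) := Fin.ext_iff
    have hin : (i : ℕ) < q + 4 := i.isLt
    simp only [hij, hj]
    split_ifs <;> first | omega | norm_num
  have colS2 : ∀ (y : Fin (q+4) → ℚ) (j : Fin (q+4)), (j : ℕ) = q + 2 →
      Matrix.vecMul y M j =
      2 * extv (q+4) y (q+2) + (-1) * extv (q+4) y (q+1) := by
    intro y j hj
    refine vecMul_col2 M y j (q+2) (q+1) 2 (-1) (fun i => ?_)
    rw [hM i j]
    have hij : (i = j) ↔ ((i : ℕ) = (j : ℕ)) := Fin.ext_iff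
    have hin : (i : ℕ) < q + 4 := i.isLt
    simp only [hij, hj]
    split_ifs <;> first | omega | norm_num
  have colS3 : ∀ (y : Fin (q+4) → ℚ) (j : Fin (q+4)), (j : ℕ) = q + 3 →
      Matrix.vecMul y M j =
      2 * extv (q+4) y (q+3) + (-1) * extv (q+4) y (q+1) := by
    intro y j hj
    refine vecMul_col2 M y j (q+3) (q+1) 2 (-1) (fun i => ?_)
    rw [hM i j]
    have hij : (i = j) ↔ ((i : ℕ) = (j : ℕ)) := Fin.ext_iff
    have hin : (i : ℕ) < q + 4 := i.isLt
    simp only [hij, hj]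
    split_ifs <;> first | omega | norm_num
  have hker : ∀ y, Matrix.vecMul y M = 0 → y = 0 := by
    intro y hy
    have hchain : ∀ m, m < q + 1 →
        extv (q+4) y (m + 1) =
          2 * extv (q+4) y m - (if m = 0 then 0 else extv (q+4) y (m - 1)) := by
      intro m hm
      have e := congr_fun hy ⟨m, by omega⟩
      rw [colA y ⟨m, by omega⟩ (by show m ≤ q; omega)] at e
      simp only [Pi.zero_apply] at e
      match m with
      | 0 =>
        rw [pidx_zero, extv_ge y (le_refl (q+4))] at e
        rw [if_pos rfl]
        linarith [e]
      | (k+1) =>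
        rw [pidx_succ] at e
        simp only [Nat.add_sub_cancel, if_neg (Nat.succ_ne_zero k)]
        linarith [e]
    have hall := chain (extv (q+4) y) (q+1) hchain
    have e1 := congr_fun hy ⟨q+2, by omega⟩
    rw [colS2 y ⟨q+2, by omega⟩ rfl] at e1
    simp only [Pi.zero_apply] at e1
    have e2 := congr_fun hy ⟨q+3, by omega⟩
    rw [colS3 y ⟨q+3, by omega⟩ rfl] at e2
    simp only [Pi.zero_apply] at e2
    have e3 := congr_fun hy ⟨q+1, by omega⟩
    rw [colS1 y ⟨q+1, by omega⟩ rfl] at e3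
    simp only [Pi.zero_apply] at e3
    have hq1 := hall (q+1) (le_refl _)
    have hq0 := hall q (by omega)
    have h0 : extv (q+4) y 0 = 0 := by
      push_cast at hq1 hq0
      nlinarith [e1, e2, e3, hq1, hq0]
    have hzero : ∀ m, m < q + 4 → extv (q+4) y m = 0 := by
      intro m hm
      rcases Nat.lt_or_ge m (q+2) with hlt | hge
      · rw [hall m (by omega), h0]; ring
      · have hq1' : extv (q+4) y (q+1) = 0 := by rw [hall (q+1) (le_refl _), h0]; ring
        rw [hq1'] at e1 e2
        rcases Nat.eq_or_lt_of_le hge with hm2 | hm3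
        · rw [← hm2]; linarith [e1]
        · have : m = q + 3 := by omega
          rw [this]; linarith [e2]
    funext j
    have := hzero (j : ℕ) j.isLt
    rw [extv_lt y j.isLt] at this
    simpa using this
  set w : ℕ → ℚ := fun m =>
    if q + 2 ≤ m then ((q : ℚ) + 3) * ((q : ℚ) + 4) / 2
    else -(m : ℚ)^2 + (2*(q : ℚ) + 5) * (m : ℚ) + 2*(q : ℚ) + 6 with hwdef
  set v : Fin (q+4) → ℚ := fun j => w (j : ℕ) with hvdef
  have hvp : ∀ (m : ℕ), m < q + 2 →
      extv (q+4) v m = -(m : ℚ)^2 + (2*(q : ℚ) + 5) * (m : ℚ) + 2*(q : ℚ) + 6 := by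
    intro m hm
    rw [hvdef, extv_comp w (by omega), hwdef]
    simp only
    rw [if_neg (by omega)]
  have hvl : ∀ (m : ℕ), q + 2 ≤ m → m < q + 4 →
      extv (q+4) v m = ((q : ℚ) + 3) * ((q : ℚ) + 4) / 2 := by
    intro m h1 h2
    rw [hvdef, extv_comp w h2, hwdef]
    simp only
    rw [if_pos h1]
  have hvsol : Matrix.vecMul v M = fun _ => 2 := by
    funext j
    have hjn : (j : ℕ) < q + 4 := j.isLt
    rcases Nat.lt_or_ge (j : ℕ) (q+1) with hj | hj
    · rw [colA v j (by omega)]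
      match hm : (j : ℕ), hj with
      | 0, hj =>
        rw [pidx_zero, extv_ge v (le_refl (q+4)), hvp 0 (by omega), hvp 1 (by omega)]
        push_cast
        ring
      | (k+1), hj =>
        rw [pidx_succ, hvp (k+1) (by omega), hvp k (by omega), hvp (k+2) (by omega)]
        push_cast
        ring
    · rcases Nat.eq_or_lt_of_le hj with hj1 | hj1
      · rw [colS1 v j hj1.symm, hvp (q+1) (by omega), hvp q (by omega),
          hvl (q+2) (by omega) (by omega), hvl (q+3) (by omega) (by omega)]
        push_cast
        ring
      · rcases Nat.eq_or_lt_of_le hj1 with hj2 | hj3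
        · rw [colS2 v j hj2.symm, hvp (q+1) (by omega), hvl (q+2) (by omega) (by omega)]
          push_cast
          ring
        · have hj4 : (j : ℕ) = q + 3 := by omega
          rw [colS3 v j hj4, hvp (q+1) (by omega), hvl (q+3) (by omega) (by omega)]
          push_cast
          ring
  have hvb : ∀ j, 2 ≤ v j := by
    intro j
    have hjn : (j : ℕ) < q + 4 := j.isLt
    have hq0 : (0 : ℚ) ≤ (q : ℚ) := by positivity
    rw [hvdef]
    simp only [hwdef]
    split_ifs with hc
    · nlinarith
    · have h1 : ((j : ℕ) : ℚ) ≤ (q : ℚ) + 1 := by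
        have : (j : ℕ) ≤ q + 1 := by omega
        exact_mod_cast this
      have h2 : (0 : ℚ) ≤ ((j : ℕ) : ℚ) := by positivity
      nlinarith
  exact good_of_ker_sol M hker v hvsol hvb



lemma goodE6 (M : Matrix (Fin 6) (Fin 6) ℚ)
    (hM : ∀ i j, M i j = (CartanMatrix.E₆ i j : ℚ)) : Good 6 M := by
  have key : ∀ (y : Fin 6 → ℚ) (t : ℚ), Matrix.vecMul y M = (fun _ => t) →
      ∀ j : Fin 6, ∃ c : ℚ, y j = c * t ∧ 2 ≤ 2 * c := by
    intro y t hy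
    have e0 := congr_fun hy 0
    have e1 := congr_fun hy 1
    have e2 := congr_fun hy 2
    have e3 := congr_fun hy 3
    have e4 := congr_fun hy 4
    have e5 := congr_fun hy 5
    simp [Matrix.vecMul, dotProduct, Fin.sum_univ_six, hM,
      show (CartanMatrix.E₆ 0 0 : ℤ) = 2 from rfl, show (CartanMatrix.E₆ 0 1 : ℤ) = 0 from rfl, show (CartanMatrix.E₆ 0 2 : ℤ) = -1 from rfl, show (CartanMatrix.E₆ 0 3 : ℤ) = 0 from rfl, show (CartanMatrix.E₆ 0 4 : ℤ) = 0 from rfl, show (CartanMatrix.E₆ 0 5 : ℤ) = 0 from rfl, show (CartanMatrix.E₆ 1 0 : ℤ) = 0 from rfl, show (CartanMatrix.E₆ 1 1 : ℤ) = 2 from rfl, show (CartanMatrix.E₆ 1 2 : ℤ) = 0 from rfl, show (CartanMatrix.E₆ 1 3 : ℤ) = -1 from rfl, show (CartanMatrix.E₆ 1 4 : ℤ) = 0 from rfl, show (CartanMatrix.E₆ 1 5 : ℤ) = 0 from rfl, show (CartanMatrix.E₆ 2 0 : ℤ) = -1 from rfl, show (CartanMatrix.E₆ 2 1 : ℤ)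 = 0 from rfl, show (CartanMatrix.E₆ 2 2 : ℤ) = 2 from rfl, show (CartanMatrix.E₆ 2 3 : ℤ) = -1 from rfl, show (CartanMatrix.E₆ 2 4 : ℤ) = 0 from rfl, show (CartanMatrix.E₆ 2 5 : ℤ) = 0 from rfl, show (CartanMatrix.E₆ 3 0 : ℤ) = 0 from rfl, show (CartanMatrix.E₆ 3 1 : ℤ) = -1 from rfl, show (CartanMatrix.E₆ 3 2 : ℤ) = -1 from rfl, show (CartanMatrix.E₆ 3 3 : ℤ) = 2 from rfl, show (CartanMatrix.E₆ 3 4 : ℤ) = -1 from rfl, show (CartanMatrix.E₆ 3 5 : ℤ) = 0 from rfl, show (CartanMatrix.E₆ 4 0 : ℤ) = 0 from rfl, show (CartanMatrix.E₆ 4 1 : ℤ) = 0 from rfl, show (CartanMatrix.E₆ 4 2 : ℤ) = 0 from rfl, show (CartanMatrix.E₆ 4 3 : ℤ) = -1 from rfl, show (CartanMatrix.E₆ 4 4 : ℤ) = 2 from rfl, show (CartanMatrix.E₆ 4 5 : ℤ) = -1 from rfl, show (CartanMatrix.E₆ 5 0 : ℤ) = 0 from rfl, show (CartanMatrix.E₆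 5 1 : ℤ) = 0 from rfl, show (CartanMatrix.E₆ 5 2 : ℤ) = 0 from rfl, show (CartanMatrix.E₆ 5 3 : ℤ) = 0 from rfl, show (CartanMatrix.E₆ 5 4 : ℤ) = -1 from rfl, show (CartanMatrix.E₆ 5 5 : ℤ) = 2 from rfl] at e0 e1 e2 e3 e4 e5
    intro j
    fin_cases j
    · exact ⟨(8 : ℚ), by show y 0 = (8 : ℚ) * t; linarith, by norm_num⟩
    · exact ⟨(11 : ℚ), by show y 1 = (11 : ℚ) * t; linarith, by norm_num⟩
    · exact ⟨(15 : ℚ), by show y 2 = (15 : ℚ) * t; linarith, by norm_num⟩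
    · exact ⟨(21 : ℚ), by show y 3 = (21 : ℚ) * t; linarith, by norm_num⟩
    · exact ⟨(15 : ℚ), by show y 4 = (15 : ℚ) * t; linarith, by norm_num⟩
    · exact ⟨(8 : ℚ), by show y 5 = (8 : ℚ) * t; linarith, by norm_num⟩
  have hker : ∀ y, Matrix.vecMul y M = 0 → y = 0 := by
    intro y hy
    funext j
    obtain ⟨c, hc, -⟩ := key y 0 (by funext p; simpa using congr_fun hy p) j
    simpa using hc
  refine ⟨isUnit_of_ker M hker, ?_⟩
  intro y hy j
  obtain ⟨c, hc, hc2⟩ := key y 2 hy j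
  rw [hc]
  linarith

lemma goodE7 (M : Matrix (Fin 7) (Fin 7) ℚ)
    (hM : ∀ i j, M i j = (CartanMatrix.E₇ i j : ℚ)) : Good 7 M := by
  have key : ∀ (y : Fin 7 → ℚ) (t : ℚ), Matrix.vecMul y M = (fun _ => t) →
      ∀ j : Fin 7, ∃ c : ℚ, y j = c * t ∧ 2 ≤ 2 * c := by
    intro y t hy
    have e0 := congr_fun hy 0
    have e1 := congr_fun hy 1
    have e2 := congr_fun hy 2
    have e3 := congr_fun hy 3
    have e4 := congr_fun hy 4
    have e5 := congr_fun hy 5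
    have e6 := congr_fun hy 6
    simp [Matrix.vecMul, dotProduct, Fin.sum_univ_seven, hM,
      show (CartanMatrix.E₇ 0 0 : ℤ) = 2 from rfl, show (CartanMatrix.E₇ 0 1 : ℤ) = 0 from rfl, show (CartanMatrix.E₇ 0 2 : ℤ) = -1 from rfl, show (CartanMatrix.E₇ 0 3 : ℤ) = 0 from rfl, show (CartanMatrix.E₇ 0 4 : ℤ) = 0 from rfl, show (CartanMatrix.E₇ 0 5 : ℤ) = 0 from rfl, show (CartanMatrix.E₇ 0 6 : ℤ) = 0 from rfl, show (CartanMatrix.E₇ 1 0 : ℤ) = 0 from rfl, show (CartanMatrix.E₇ 1 1 : ℤ) = 2 from rfl, show (CartanMatrix.E₇ 1 2 : ℤ) = 0 from rfl, show (CartanMatrix.E₇ 1 3 : ℤ) = -1 from rfl, show (CartanMatrix.E₇ 1 4 : ℤ) = 0 from rfl, show (CartanMatrix.E₇ 1 5 : ℤ) = 0 from rfl, show (CartanMatrix.E₇ 1 6 : ℤ) = 0 from rfl, show (CartanMatrix.E₇ 2 0 : ℤ) = -1 from rfl, show (CartanMatrix.E₇ 2 1 : ℤ) = 0 from rfl, show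 (CartanMatrix.E₇ 2 2 : ℤ) = 2 from rfl, show (CartanMatrix.E₇ 2 3 : ℤ) = -1 from rfl, show (CartanMatrix.E₇ 2 4 : ℤ) = 0 from rfl, show (CartanMatrix.E₇ 2 5 : ℤ) = 0 from rfl, show (CartanMatrix.E₇ 2 6 : ℤ) = 0 from rfl, show (CartanMatrix.E₇ 3 0 : ℤ) = 0 from rfl, show (CartanMatrix.E₇ 3 1 : ℤ) = -1 from rfl, show (CartanMatrix.E₇ 3 2 : ℤ) = -1 from rfl, show (CartanMatrix.E₇ 3 3 : ℤ) = 2 from rfl, show (CartanMatrix.E₇ 3 4 : ℤ) = -1 from rfl, show (CartanMatrix.E₇ 3 5 : ℤ) = 0 from rfl, show (CartanMatrix.E₇ 3 6 : ℤ) = 0 from rfl, show (CartanMatrix.E₇ 4 0 : ℤ) = 0 from rfl, show (CartanMatrix.E₇ 4 1 : ℤ) = 0 from rfl, show (CartanMatrix.E₇ 4 2 : ℤ) = 0 from rfl, show (CartanMatrix.E₇ 4 3 : ℤ) = -1 from rfl, show (CartanMatrix.E₇ 4 4 : ℤ) = 2 from rfl, show (CartanMatrix.E₇ 4 5 : ℤ)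 = -1 from rfl, show (CartanMatrix.E₇ 4 6 : ℤ) = 0 from rfl, show (CartanMatrix.E₇ 5 0 : ℤ) = 0 from rfl, show (CartanMatrix.E₇ 5 1 : ℤ) = 0 from rfl, show (CartanMatrix.E₇ 5 2 : ℤ) = 0 from rfl, show (CartanMatrix.E₇ 5 3 : ℤ) = 0 from rfl, show (CartanMatrix.E₇ 5 4 : ℤ) = -1 from rfl, show (CartanMatrix.E₇ 5 5 : ℤ) = 2 from rfl, show (CartanMatrix.E₇ 5 6 : ℤ) = -1 from rfl, show (CartanMatrix.E₇ 6 0 : ℤ) = 0 from rfl, show (CartanMatrix.E₇ 6 1 : ℤ) = 0 from rfl, show (CartanMatrix.E₇ 6 2 : ℤ) = 0 from rfl, show (CartanMatrix.E₇ 6 3 : ℤ) = 0 from rfl, show (CartanMatrix.E₇ 6 4 : ℤ) = 0 from rfl, show (CartanMatrix.E₇ 6 5 : ℤ) = -1 from rfl, show (CartanMatrix.E₇ 6 6 : ℤ) = 2 from rfl] at e0 e1 e2 e3 e4 e5 e6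
    intro j
    fin_cases j
    · exact ⟨(17 : ℚ), by show y 0 = (17 : ℚ) * t; linarith, by norm_num⟩
    · exact ⟨(49/2 : ℚ), by show y 1 = (49/2 : ℚ) * t; linarith, by norm_num⟩
    · exact ⟨(33 : ℚ), by show y 2 = (33 : ℚ) * t; linarith, by norm_num⟩
    · exact ⟨(48 : ℚ), by show y 3 = (48 : ℚ) * t; linarith, by norm_num⟩
    · exact ⟨(75/2 : ℚ), by show y 4 = (75/2 : ℚ) * t; linarith, by norm_num⟩
    · exact ⟨(26 : ℚ), by show y 5 = (26 : ℚ) * t; linarith, by norm_num⟩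
    · exact ⟨(27/2 : ℚ), by show y 6 = (27/2 : ℚ) * t; linarith, by norm_num⟩
  have hker : ∀ y, Matrix.vecMul y M = 0 → y = 0 := by
    intro y hy
    funext j
    obtain ⟨c, hc, -⟩ := key y 0 (by funext p; simpa using congr_fun hy p) j
    simpa using hc
  refine ⟨isUnit_of_ker M hker, ?_⟩
  intro y hy j
  obtain ⟨c, hc, hc2⟩ := key y 2 hy j
  rw [hc]
  linarith

lemma goodE8 (M : Matrix (Fin 8) (Fin 8) ℚ)
    (hM : ∀ i j, M i j = (CartanMatrix.E₈ i j : ℚ)) : Good 8 M := by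
  have key : ∀ (y : Fin 8 → ℚ) (t : ℚ), Matrix.vecMul y M = (fun _ => t) →
      ∀ j : Fin 8, ∃ c : ℚ, y j = c * t ∧ 2 ≤ 2 * c := by
    intro y t hy
    have e0 := congr_fun hy 0
    have e1 := congr_fun hy 1
    have e2 := congr_fun hy 2
    have e3 := congr_fun hy 3
    have e4 := congr_fun hy 4
    have e5 := congr_fun hy 5
    have e6 := congr_fun hy 6
    have e7 := congr_fun hy 7
    simp [Matrix.vecMul, dotProduct, Fin.sum_univ_eight, hM,
      show (CartanMatrix.E₈ 0 0 : ℤ) = 2 from rfl, show (CartanMatrix.E₈ 0 1 : ℤ) = 0 from rfl, show (CartanMatrix.E₈ 0 2 : ℤ) = -1 from rfl, show (CartanMatrix.E₈ 0 3 : ℤ) = 0 from rfl, show (CartanMatrix.E₈ 0 4 : ℤ) = 0 from rfl, show (CartanMatrix.E₈ 0 5 : ℤ) = 0 from rfl, show (CartanMatrix.E₈ 0 6 : ℤ) = 0 from rfl, show (CartanMatrix.E₈ 0 7 : ℤ) = 0 from rfl, show (CartanMatrix.E₈ 1 0 : ℤ) = 0 from rfl, show (CartanMatrix.E₈ 1 1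 : ℤ) = 2 from rfl, show (CartanMatrix.E₈ 1 2 : ℤ) = 0 from rfl, show (CartanMatrix.E₈ 1 3 : ℤ) = -1 from rfl, show (CartanMatrix.E₈ 1 4 : ℤ) = 0 from rfl, show (CartanMatrix.E₈ 1 5 : ℤ) = 0 from rfl, show (CartanMatrix.E₈ 1 6 : ℤ) = 0 from rfl, show (CartanMatrix.E₈ 1 7 : ℤ) = 0 from rfl, show (CartanMatrix.E₈ 2 0 : ℤ) = -1 from rfl, show (CartanMatrix.E₈ 2 1 : ℤ) = 0 from rfl, show (CartanMatrix.E₈ 2 2 : ℤ) = 2 from rfl, show (CartanMatrix.E₈ 2 3 : ℤ) = -1 from rfl, show (CartanMatrix.E₈ 2 4 : ℤ) = 0 from rfl, show (CartanMatrix.E₈ 2 5 : ℤ) = 0 from rfl, show (CartanMatrix.E₈ 2 6 : ℤ) = 0 from rfl, show (CartanMatrix.E₈ 2 7 : ℤ) = 0 from rfl, show (CartanMatrix.E₈ 3 0 : ℤ) = 0 from rfl, show (CartanMatrix.E₈ 3 1 : ℤ) = -1 from rfl, show (CartanMatrix.E₈ 3 2 : ℤ) = -1 from rfl, show (CartanMatrix.E₈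 3 3 : ℤ) = 2 from rfl, show (CartanMatrix.E₈ 3 4 : ℤ) = -1 from rfl, show (CartanMatrix.E₈ 3 5 : ℤ) = 0 from rfl, show (CartanMatrix.E₈ 3 6 : ℤ) = 0 from rfl, show (CartanMatrix.E₈ 3 7 : ℤ) = 0 from rfl, show (CartanMatrix.E₈ 4 0 : ℤ) = 0 from rfl, show (CartanMatrix.E₈ 4 1 : ℤ) = 0 from rfl, show (CartanMatrix.E₈ 4 2 : ℤ) = 0 from rfl, show (CartanMatrix.E₈ 4 3 : ℤ) = -1 from rfl, show (CartanMatrix.E₈ 4 4 : ℤ) = 2 from rfl, show (CartanMatrix.E₈ 4 5 : ℤ) = -1 from rfl, show (CartanMatrix.E₈ 4 6 : ℤ) = 0 from rfl, show (CartanMatrix.E₈ 4 7 : ℤ) = 0 from rfl, show (CartanMatrix.E₈ 5 0 : ℤ) = 0 from rfl, show (CartanMatrix.E₈ 5 1 : ℤ) = 0 from rfl, show (CartanMatrix.E₈ 5 2 : ℤ) = 0 from rfl, show (CartanMatrix.E₈ 5 3 : ℤ) = 0 from rfl, show (CartanMatrix.E₈ 5 4 : ℤ) = -1 from rfl, show (CartanMatrix.E₈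 5 5 : ℤ) = 2 from rfl, show (CartanMatrix.E₈ 5 6 : ℤ) = -1 from rfl, show (CartanMatrix.E₈ 5 7 : ℤ) = 0 from rfl, show (CartanMatrix.E₈ 6 0 : ℤ) = 0 from rfl, show (CartanMatrix.E₈ 6 1 : ℤ) = 0 from rfl, show (CartanMatrix.E₈ 6 2 : ℤ) = 0 from rfl, show (CartanMatrix.E₈ 6 3 : ℤ) = 0 from rfl, show (CartanMatrix.E₈ 6 4 : ℤ) = 0 from rfl, show (CartanMatrix.E₈ 6 5 : ℤ) = -1 from rfl, show (CartanMatrix.E₈ 6 6 : ℤ) = 2 from rfl, show (CartanMatrix.E₈ 6 7 : ℤ) = -1 from rfl, show (CartanMatrix.E₈ 7 0 : ℤ) = 0 from rfl, show (CartanMatrix.E₈ 7 1 : ℤ) = 0 from rfl, show (CartanMatrix.E₈ 7 2 : ℤ) = 0 from rfl, show (CartanMatrix.E₈ 7 3 : ℤ) = 0 from rfl, show (CartanMatrix.E₈ 7 4 : ℤ) = 0 from rfl, show (CartanMatrix.E₈ 7 5 : ℤ) = 0 from rfl, show (CartanMatrix.E₈ 7 6 : ℤ) = -1 from rfl, show (CartanMatrix.E₈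 7 7 : ℤ) = 2 from rfl] at e0 e1 e2 e3 e4 e5 e6 e7
    intro j
    fin_cases j
    · exact ⟨(46 : ℚ), by show y 0 = (46 : ℚ) * t; linarith, by norm_num⟩
    · exact ⟨(68 : ℚ), by show y 1 = (68 : ℚ) * t; linarith, by norm_num⟩
    · exact ⟨(91 : ℚ), by show y 2 = (91 : ℚ) * t; linarith, by norm_num⟩
    · exact ⟨(135 : ℚ), by show y 3 = (135 : ℚ) * t; linarith, by norm_num⟩
    · exact ⟨(110 : ℚ), by show y 4 = (110 : ℚ) * t; linarith, by norm_num⟩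
    · exact ⟨(84 : ℚ), by show y 5 = (84 : ℚ) * t; linarith, by norm_num⟩
    · exact ⟨(57 : ℚ), by show y 6 = (57 : ℚ) * t; linarith, by norm_num⟩
    · exact ⟨(29 : ℚ), by show y 7 = (29 : ℚ) * t; linarith, by norm_num⟩
  have hker : ∀ y, Matrix.vecMul y M = 0 → y = 0 := by
    intro y hy
    funext j
    obtain ⟨c, hc, -⟩ := key y 0 (by funext p; simpa using congr_fun hy p) j
    simpa using hc
  refine ⟨isUnit_of_ker M hker, ?_⟩
  intro y hy j
  obtain ⟨c, hc, hc2⟩ := key y 2 hy j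
  rw [hc]
  linarith

lemma goodF4 (M : Matrix (Fin 4) (Fin 4) ℚ)
    (hM : ∀ i j, M i j = (CartanMatrix.F₄ i j : ℚ)) : Good 4 M := by
  have key : ∀ (y : Fin 4 → ℚ) (t : ℚ), Matrix.vecMul y M = (fun _ => t) →
      ∀ j : Fin 4, ∃ c : ℚ, y j = c * t ∧ 2 ≤ 2 * c := by
    intro y t hy
    have e0 := congr_fun hy 0
    have e1 := congr_fun hy 1
    have e2 := congr_fun hy 2
    have e3 := congr_fun hy 3
    simp [Matrix.vecMul, dotProduct, Fin.sum_univ_four, hM,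
      show (CartanMatrix.F₄ 0 0 : ℤ) = 2 from rfl, show (CartanMatrix.F₄ 0 1 : ℤ) = -1 from rfl, show (CartanMatrix.F₄ 0 2 : ℤ) = 0 from rfl, show (CartanMatrix.F₄ 0 3 : ℤ) = 0 from rfl, show (CartanMatrix.F₄ 1 0 : ℤ) = -1 from rfl, show (CartanMatrix.F₄ 1 1 : ℤ) = 2 from rfl, show (CartanMatrix.F₄ 1 2 : ℤ) = -2 from rfl, show (CartanMatrix.F₄ 1 3 : ℤ) = 0 from rfl, show (CartanMatrix.F₄ 2 0 : ℤ) = 0 from rfl, show (CartanMatrix.F₄ 2 1 : ℤ) = -1 from rfl, show (CartanMatrix.F₄ 2 2 : ℤ) = 2 from rfl, show (CartanMatrix.F₄ 2 3 : ℤ) = -1 from rfl, show (CartanMatrix.F₄ 3 0 : ℤ) = 0 from rfl, show (CartanMatrix.F₄ 3 1 : ℤ) = 0 from rfl, show (CartanMatrix.F₄ 3 2 : ℤ) = -1 from rfl, show (CartanMatrix.F₄ 3 3 : ℤ) = 2 from rfl] at e0 e1 e2 e3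
    intro j
    fin_cases j
    · exact ⟨(8 : ℚ), by show y 0 = (8 : ℚ) * t; linarith, by norm_num⟩
    · exact ⟨(15 : ℚ), by show y 1 = (15 : ℚ) * t; linarith, by norm_num⟩
    · exact ⟨(21 : ℚ), by show y 2 = (21 : ℚ) * t; linarith, by norm_num⟩
    · exact ⟨(11 : ℚ), by show y 3 = (11 : ℚ) * t; linarith, by norm_num⟩
  have hker : ∀ y, Matrix.vecMul y M = 0 → y = 0 := by
    intro y hy
    funext j
    obtain ⟨c, hc, -⟩ := key y 0 (by funext p; simpa using congr_fun hy p) j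
    simpa using hc
  refine ⟨isUnit_of_ker M hker, ?_⟩
  intro y hy j
  obtain ⟨c, hc, hc2⟩ := key y 2 hy j
  rw [hc]
  linarith

lemma goodG2 (M : Matrix (Fin 2) (Fin 2) ℚ)
    (hM : ∀ i j, M i j = (CartanMatrix.G₂ i j : ℚ)) : Good 2 M := by
  have key : ∀ (y : Fin 2 → ℚ) (t : ℚ), Matrix.vecMul y M = (fun _ => t) →
      ∀ j : Fin 2, ∃ c : ℚ, y j = c * t ∧ 2 ≤ 2 * c := by
    intro y t hy
    have e0 := congr_fun hy 0
    have e1 := congr_fun hy 1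
    simp [Matrix.vecMul, dotProduct, Fin.sum_univ_two, hM,
      show (CartanMatrix.G₂ 0 0 : ℤ) = 2 from rfl, show (CartanMatrix.G₂ 0 1 : ℤ) = -3 from rfl, show (CartanMatrix.G₂ 1 0 : ℤ) = -1 from rfl, show (CartanMatrix.G₂ 1 1 : ℤ) = 2 from rfl] at e0 e1
    intro j
    fin_cases j
    · exact ⟨(3 : ℚ), by show y 0 = (3 : ℚ) * t; linarith, by norm_num⟩
    · exact ⟨(5 : ℚ), by show y 1 = (5 : ℚ) * t; linarith, by norm_num⟩
  have hker : ∀ y, Matrix.vecMul y M = 0 → y = 0 := by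
    intro y hy
    funext j
    obtain ⟨c, hc, -⟩ := key y 0 (by funext p; simpa using congr_fun hy p) j
    simpa using hc
  refine ⟨isUnit_of_ker M hker, ?_⟩
  intro y hy j
  obtain ⟨c, hc, hc2⟩ := key y 2 hy j
  rw [hc]
  linarith


lemma goodExc (M : Matrix (Fin n) (Fin n) ℚ) (h : IsCartanExceptional n M) : Good n M := by
  rcases h with ⟨rfl, h⟩ | ⟨rfl, h⟩ | ⟨rfl, h⟩ | ⟨rfl, h⟩ | ⟨rfl, h⟩
  · exact goodE6 _ (by simpa using h)
  · exact goodE7 _ (by simpa using h)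
  · exact goodE8 _ (by simpa using h)
  · exact goodF4 _ (by simpa using h)
  · exact goodG2 _ (by simpa using h)

lemma isUnit_blockDiagonal' {k : ℕ} {ℓ : Fin k → ℕ}
    (M : ∀ i, Matrix (Fin (ℓ i)) (Fin (ℓ i)) ℚ) (h : ∀ i, IsUnit (M i)) :
    IsUnit (Matrix.blockDiagonal' M) := by
  have h' : ∀ i, ∃ B, M i * B = 1 ∧ B * M i = 1 := by
    intro i
    obtain ⟨u, hu⟩ := h i
    exact ⟨(u⁻¹ : _).val, by rw [← hu]; exact u.mul_inv, by rw [← hu]; exact u.inv_mul⟩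
  choose B hB1 hB2 using h' 
  refine ⟨⟨Matrix.blockDiagonal' M, Matrix.blockDiagonal' B, ?_, ?_⟩, rfl⟩
  · rw [← Matrix.blockDiagonal'_mul]
    have : (fun i => M i * B i) = fun i => (1 : Matrix (Fin (ℓ i)) (Fin (ℓ i)) ℚ) := by
      funext i; exact hB1 i
    rw [this]
    exact Matrix.blockDiagonal'_one
  · rw [← Matrix.blockDiagonal'_mul]
    have : (fun i => B i * M i) = fun i => (1 : Matrix (Fin (ℓ i)) (Fin (ℓ i)) ℚ) := by
      funext i; exact hB2 i
    rw [this]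
    exact Matrix.blockDiagonal'_one

lemma vecMul_blockDiagonal'_apply {k : ℕ} {ℓ : Fin k → ℕ}
    (M : ∀ i, Matrix (Fin (ℓ i)) (Fin (ℓ i)) ℚ) (x : (Σ i, Fin (ℓ i)) → ℚ)
    (i : Fin k) (j : Fin (ℓ i)) :
    Matrix.vecMul x (Matrix.blockDiagonal' M) ⟨i, j⟩ =
      Matrix.vecMul (fun j' => x ⟨i, j'⟩) (M i) j := by
  have lhs : Matrix.vecMul x (Matrix.blockDiagonal' M) ⟨i, j⟩ =
      ∑ p : (Σ i', Fin (ℓ i')), x p * Matrix.blockDiagonal' M p ⟨i, j⟩ := by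
    simp [Matrix.vecMul, dotProduct]
  rw [lhs, ← Finset.univ_sigma_univ, Finset.sum_sigma]
  rw [Fintype.sum_eq_single i]
  · have rhs : Matrix.vecMul (fun j' => x ⟨i, j'⟩) (M i) j =
        ∑ j' : Fin (ℓ i), x ⟨i, j'⟩ * M i j' j := by
      simp [Matrix.vecMul, dotProduct]
    rw [rhs]
    refine Finset.sum_congr rfl (fun j' _ => ?_)
    rw [Matrix.blockDiagonal'_apply_eq]
  · intro i' hi'
    refine Finset.sum_eq_zero (fun j' _ => ?_)
    rw [Matrix.blockDiagonal'_apply_ne _ _ _ hi', mul_zero]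

end Stmt16Aux

/-- Let `A` be a block-diagonal matrix over `ℚ` whose diagonal blocks are Cartan matrices of
types `A_n (n ≥ 2)`, `B_n (n ≥ 3)`, `C_n (n ≥ 2)`, `D_n (n ≥ 4)`, `E₆`, `E₇`, `E₈`, `F₄`
or `G₂`.  Then `A` is invertible and every entry of the unique row vector `x` with
`x · A = (2,…,2)` is at least `2`: if a semisimple root system has no simple component of
rank 1, every fundamental weight takes value at least `2` on the principal coweight. -/
theorem stmt16 (k : ℕ) (ℓ : Fin k → ℕ)
    (M : ∀ i, Matrix (Fin (ℓ i)) (Fin (ℓ i)) ℚ)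
    (hM : ∀ i, IsCartanTypeA (ℓ i) (M i) ∨ IsCartanTypeB (ℓ i) (M i) ∨
      IsCartanTypeC (ℓ i) (M i) ∨ IsCartanTypeD (ℓ i) (M i) ∨
      IsCartanExceptional (ℓ i) (M i)) :
    IsUnit (Matrix.blockDiagonal' M) ∧
      ∀ x : (Σ i, Fin (ℓ i)) → ℚ,
        Matrix.vecMul x (Matrix.blockDiagonal' M) = (fun _ => 2) →
          ∀ p, 2 ≤ x p := by
  have good : ∀ i, Stmt16Aux.Good (ℓ i) (M i) := by
    intro i
    rcases hM i with h | h | h | h | h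
    · exact Stmt16Aux.goodA _ h
    · exact Stmt16Aux.goodB _ h
    · exact Stmt16Aux.goodC _ h
    · exact Stmt16Aux.goodD _ h
    · exact Stmt16Aux.goodExc _ h
  constructor
  · exact Stmt16Aux.isUnit_blockDiagonal' M (fun i => (good i).1)
  · intro x hx p
    obtain ⟨i, j⟩ := p
    have hcomp : Matrix.vecMul (fun j' => x ⟨i, j'⟩) (M i) = fun _ => 2 := by
      funext j0
      rw [← Stmt16Aux.vecMul_blockDiagonal'_apply M x i j0]
      exact congr_fun hx ⟨i, j0⟩
    exact (good i).2 _ hcomp j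
end
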